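/- arXiv:1307.3073 — 2 statements merged into one kernel-verified Lean document; each statement's English description precedes it below -/
import Mathlib

section
/- If a permutation σ is a subpattern of a permutation π (i.e., there is an order-preserving embedding of σ into π in both coordinates), then the width of σ is at most the width of π, where the width of a permutation is the minimum d such that it admits a d-wide merge decomposition of its point set into bounding-box rectangles. -/
/-- A point in the plane. -/
abbrev Pt := ℕ × ℕ
/-- A (discrete) interval, given by its two endpoints. -/
abbrev Iv := ℕ × ℕ
/-- An axis-parallel rectangle: a pair (x-interval, y-interval). -/
abbrev Rect := Iv × Iv

/-- The α-coordinate of a point (α ∈ {1,2} encoded as Fin 2). -/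
def coordPt (α : Fin 2) (p : Pt) : ℕ := if α = 0 then p.1 else p.2

/-- The α-projection of a rectangle. -/
def rproj (α : Fin 2) (R : Rect) : Iv := if α = 0 then R.1 else R.2

/-- Two intervals intersect. -/
def ivOverlap (I J : Iv) : Prop := I.1 ≤ J.2 ∧ J.1 ≤ I.2

instance : ∀ I J, Decidable (ivOverlap I J) := fun I J => by
  unfold ivOverlap; infer_instance

/-- Interval `I` lies strictly before interval `J`. -/
def ivLt (I J : Iv) : Prop := I.2 < J.1

instance : ∀ I J, Decidable (ivLt I J) := fun I J => by
  unfold ivLt; infer_instance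

/-- Interval containment. -/
def ivSub (I J : Iv) : Prop := J.1 ≤ I.1 ∧ I.2 ≤ J.2

instance : ∀ I J, Decidable (ivSub I J) := fun I J => by
  unfold ivSub; infer_instance

/-- Two rectangles α-view each other: their α-projections intersect. -/
def rviews (α : Fin 2) (R R' : Rect) : Prop := ivOverlap (rproj α R) (rproj α R')

instance : ∀ α R R', Decidable (rviews α R R') := fun α R R' => by
  unfold rviews; infer_instance

/-- The degenerate rectangle corresponding to a point. -/
def ptRect (p : Pt) : Rect := ((p.1, p.1), (p.2, p.2))

/-- The bounding box of two rectangles. -/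
def bbox (R1 R2 : Rect) : Rect :=
  ((min R1.1.1 R2.1.1, max R1.1.2 R2.1.2), (min R1.2.1 R2.2.1, max R1.2.2 R2.2.2))

/-- A rectangle family (as a multiset of rectangles). -/
abbrev Fam := Multiset Rect

/-- A family is `d`-wide: every rectangle α-views fewer than `d` other rectangles. -/
def Wide (d : ℕ) (F : Fam) : Prop :=
  ∀ R ∈ F, ∀ α : Fin 2,
    Multiset.card (Multiset.filter (fun R' => rviews α R R') (F.erase R)) < d

/-- One merge step: two rectangles of the family are replaced by their bounding box. -/
def MergeStep (F F' : Fam) : Prop :=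
  ∃ R1 R2, R1 ∈ F ∧ R2 ∈ F.erase R1 ∧ F' = bbox R1 R2 ::ₘ ((F.erase R1).erase R2)

/-- A point set is in general position: no two points share an x- or y-coordinate. -/
def GenPos (P : Finset Pt) : Prop :=
  ∀ p ∈ P, ∀ q ∈ P, p ≠ q → p.1 ≠ q.1 ∧ p.2 ≠ q.2

/-- `L` is a decomposition of the point set `P`: it starts with the degenerate
rectangles of `P`, each step is a merge, and it ends with a single rectangle. -/
def IsDecomp (P : Finset Pt) (L : List Fam) : Prop :=
  L.head? = some (Multiset.map ptRect P.val) ∧ List.Chain' MergeStep L ∧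
  ∃ F, L.getLast? = some F ∧ Multiset.card F = 1

/-- `P` admits a `d`-wide decomposition. -/
def HasWidthLE (P : Finset Pt) (d : ℕ) : Prop :=
  ∃ L, IsDecomp P L ∧ ∀ F ∈ L, Wide d F

/-- The width of a permutation: the least `d` such that it has a `d`-wide decomposition. -/
noncomputable def permWidth (P : Finset Pt) : ℕ := sInf {d | HasWidthLE P d}

/-- `σ` is a subpattern of `π`: an injection preserving both coordinate orders. -/
def Subpattern (σ π : Finset Pt) : Prop :=
  ∃ φ : Pt → Pt, Set.InjOn φ ↑σ ∧ (∀ p ∈ σ, φ p ∈ π) ∧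
    ∀ p ∈ σ, ∀ q ∈ σ,
      (p.1 < q.1 ↔ (φ p).1 < (φ q).1) ∧ (p.2 < q.2 ↔ (φ p).2 < (φ q).2)

/-- `q` lies strictly between `p` and `p'` in coordinate `α`. -/
def Between (α : Fin 2) (p p' q : Pt) : Prop :=
  min (coordPt α p) (coordPt α p') < coordPt α q ∧
    coordPt α q < max (coordPt α p) (coordPt α p')

instance : ∀ α p p' q, Decidable (Between α p p' q) := fun _ _ _ _ => by
  unfold Between; infer_instance

/-- `{p,p'}` is a `d`-close pair of the point set `S`: in each coordinate, fewer than
`d` points of `S` lie strictly between them. -/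
def ClosePair (d : ℕ) (S : Finset Pt) (p p' : Pt) : Prop :=
  ∀ α : Fin 2, (S.filter (Between α p p')).card < d

/-- `S` has a `d`-close pair. -/
def HasClosePair (d : ℕ) (S : Finset Pt) : Prop :=
  ∃ p ∈ S, ∃ q ∈ S, p ≠ q ∧ ClosePair d S p q

/-- `P` contains an `s × s`-grid: there are monotone threshold sequences in both
coordinates such that each of the `s²` cells contains a point of `P`. -/
def ContainsGrid (s : ℕ) (P : Finset Pt) : Prop :=
  ∃ a b : Fin (s+1) → ℕ, Monotone a ∧ Monotone b ∧
    ∀ i j : Fin s, ∃ p ∈ P,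
      a i.castSucc ≤ p.1 ∧ p.1 < a i.succ ∧ b j.castSucc ≤ p.2 ∧ p.2 < b j.succ

/-- The canonical `r × r`-grid permutation. -/
def canonGrid (r : ℕ) : Finset Pt :=
  (Finset.Icc 1 r ×ˢ Finset.Icc 1 r).image
    (fun ij => ((ij.2 - 1) * r + (r - ij.1 + 1), (ij.1 - 1) * r + ij.2))

/-- A point set is increasing: the x-order and y-order coincide. -/
def IncreasingPts (S : Set Pt) : Prop := ∀ p ∈ S, ∀ q ∈ S, (p.1 < q.1 ↔ p.2 < q.2)

/-- A point set is decreasing: the x-order and y-order are opposite. -/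
def DecreasingPts (S : Set Pt) : Prop := ∀ p ∈ S, ∀ q ∈ S, (p.1 < q.1 ↔ q.2 < p.2)

/-- A point set is monotone: increasing or decreasing. -/
def MonotonePts (S : Set Pt) : Prop := IncreasingPts S ∨ DecreasingPts S

/-- `P` can be partitioned into at most `t` increasing parts. -/
def TIncreasing (t : ℕ) (P : Finset Pt) : Prop :=
  ∃ f : Pt → ℕ, (∀ p ∈ P, f p < t) ∧ ∀ c, IncreasingPts {p | p ∈ P ∧ f p = c}

/-- `P` can be partitioned into at most `t` monotone parts. -/
def TMonotone (t : ℕ) (P : Finset Pt) : Prop :=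
  ∃ f : Pt → ℕ, (∀ p ∈ P, f p < t) ∧ ∀ c, MonotonePts {p | p ∈ P ∧ f p = c}

/- ===== auxiliary development for stmt0 ===== -/

section Aux

/-- membership of a point in a rectangle. -/
def InR (q : Pt) (R : Rect) : Prop :=
  R.1.1 ≤ q.1 ∧ q.1 ≤ R.1.2 ∧ R.2.1 ≤ q.2 ∧ q.2 ≤ R.2.2

lemma InR_bbox_left {q : Pt} {R S : Rect} (h : InR q R) : InR q (bbox R S) := by
  obtain ⟨h1, h2, h3, h4⟩ := h
  exact ⟨le_trans (min_le_left _ _) h1, le_trans h2 (le_max_left _ _),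
    le_trans (min_le_left _ _) h3, le_trans h4 (le_max_left _ _)⟩

lemma InR_bbox_right {q : Pt} {R S : Rect} (h : InR q S) : InR q (bbox R S) := by
  obtain ⟨h1, h2, h3, h4⟩ := h
  exact ⟨le_trans (min_le_right _ _) h1, le_trans h2 (le_max_right _ _),
    le_trans (min_le_right _ _) h3, le_trans h4 (le_max_right _ _)⟩

noncomputable def lo (f : Pt → ℕ) (A : Finset Pt) : ℕ := sInf (↑(A.image f) : Set ℕ)
noncomputable def hi (f : Pt → ℕ) (A : Finset Pt) : ℕ := sSup (↑(A.image f) : Set ℕ)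

lemma lo_mem {f : Pt → ℕ} {A : Finset Pt} (hA : A.Nonempty) : ∃ a ∈ A, f a = lo f A := by
  have h2 : (↑(A.image f) : Set ℕ).Nonempty := by
    exact_mod_cast hA.image f
  have h3 := Nat.sInf_mem h2
  rw [Finset.mem_coe] at h3
  obtain ⟨a, ha, he⟩ := Finset.mem_image.1 h3
  exact ⟨a, ha, he⟩

lemma hi_mem {f : Pt → ℕ} {A : Finset Pt} (hA : A.Nonempty) : ∃ a ∈ A, f a = hi f A := by
  have h2 : (↑(A.image f) : Set ℕ).Nonempty := by
    exact_mod_cast hA.image f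
  have hb : BddAbove (↑(A.image f) : Set ℕ) := (A.image f).finite_toSet.bddAbove
  have h3 := Nat.sSup_mem h2 hb
  rw [Finset.mem_coe] at h3
  obtain ⟨a, ha, he⟩ := Finset.mem_image.1 h3
  exact ⟨a, ha, he⟩

lemma lo_le {f : Pt → ℕ} {A : Finset Pt} {a : Pt} (ha : a ∈ A) : lo f A ≤ f a :=
  Nat.sInf_le (by rw [Finset.mem_coe]; exact Finset.mem_image_of_mem f ha)

lemma le_hi {f : Pt → ℕ} {A : Finset Pt} {a : Pt} (ha : a ∈ A) : f a ≤ hi f A :=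
  le_csSup (A.image f).finite_toSet.bddAbove
    (by rw [Finset.mem_coe]; exact Finset.mem_image_of_mem f ha)

lemma lo_union {f : Pt → ℕ} {A B : Finset Pt} (hA : A.Nonempty) (hB : B.Nonempty) :
    lo f (A ∪ B) = min (lo f A) (lo f B) := by
  apply le_antisymm
  · rcases min_cases (lo f A) (lo f B) with ⟨he, _⟩ | ⟨he, _⟩ <;> rw [he]
    · obtain ⟨a, ha, he2⟩ := lo_mem hA
      exact he2 ▸ lo_le (Finset.mem_union_left _ ha)
    · obtain ⟨a, ha, he2⟩ := lo_mem hB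
      exact he2 ▸ lo_le (Finset.mem_union_right _ ha)
  · obtain ⟨a, ha, he⟩ := lo_mem (hA.mono (Finset.subset_union_left (s₂ := B)))
    rw [← he]
    rcases Finset.mem_union.1 ha with h | h
    · exact le_trans (min_le_left _ _) (lo_le h)
    · exact le_trans (min_le_right _ _) (lo_le h)

lemma hi_union {f : Pt → ℕ} {A B : Finset Pt} (hA : A.Nonempty) (hB : B.Nonempty) :
    hi f (A ∪ B) = max (hi f A) (hi f B) := by
  apply le_antisymm
  · obtain ⟨a, ha, he⟩ := hi_mem (hA.mono (Finset.subset_union_left (s₂ := B)))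
    rw [← he]
    rcases Finset.mem_union.1 ha with h | h
    · exact le_trans (le_hi h) (le_max_left _ _)
    · exact le_trans (le_hi h) (le_max_right _ _)
  · rcases max_cases (hi f A) (hi f B) with ⟨he, _⟩ | ⟨he, _⟩ <;> rw [he]
    · obtain ⟨a, ha, he2⟩ := hi_mem hA
      exact he2 ▸ le_hi (Finset.mem_union_left _ ha)
    · obtain ⟨a, ha, he2⟩ := hi_mem hB
      exact he2 ▸ le_hi (Finset.mem_union_right _ ha)

/-- bounding box of a finite point set. -/
noncomputable def sbox (A : Finset Pt) : Rect :=
  ((lo (fun p => p.1) A, hi (fun p => p.1) A), (lo (fun p => p.2) A, hi (fun p => p.2) A))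

lemma sbox_singleton (p : Pt) : sbox {p} = ptRect p := by
  have hl : ∀ f : Pt → ℕ, lo f {p} = f p := by
    intro f; unfold lo; simp
  have hh : ∀ f : Pt → ℕ, hi f {p} = f p := by
    intro f; unfold hi; simp [csSup_singleton]
  simp [sbox, ptRect, hl, hh]

lemma sbox_union {A B : Finset Pt} (hA : A.Nonempty) (hB : B.Nonempty) :
    sbox (A ∪ B) = bbox (sbox A) (sbox B) := by
  simp [sbox, bbox, lo_union hA hB, hi_union hA hB]

end Aux
section MultisetAux

lemma map_erase_of_mem {α β : Type*} [DecidableEq α] [DecidableEq β] (f : α → β)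
    {s : Multiset α} {x : α} (hx : x ∈ s) :
    (s.map f).erase (f x) = (s.erase x).map f := by
  conv_lhs => rw [← Multiset.cons_erase hx]
  rw [Multiset.map_cons, Multiset.erase_cons_head]

lemma countP_mono_mem {α : Type*} {p q : α → Prop} [DecidablePred p] [DecidablePred q]
    (s : Multiset α) (h : ∀ a ∈ s, p a → q a) : s.countP p ≤ s.countP q := by
  induction s using Multiset.induction with
  | empty => simp
  | cons a s ih =>
    rw [Multiset.countP_cons, Multiset.countP_cons]
    have h1 : s.countP p ≤ s.countP q := ih (fun a ha => h a (Multiset.mem_cons_of_mem ha))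
    have h2 : (if p a then 1 else 0) ≤ (if q a then 1 else 0) := by
      by_cases hp : p a
      · simp [hp, h a (Multiset.mem_cons_self a s) hp]
      · simp [hp]
    omega

end MultisetAux

section Main

variable (φ : Pt → Pt) (σ : Finset Pt)

/-- A labeled family: each π-rectangle carries the σ-points assigned to it. -/
def Good (LF : Multiset (Rect × Finset Pt)) : Prop :=
  (∀ x ∈ LF, ∀ p ∈ x.2, p ∈ σ ∧ InR (φ p) x.1) ∧ (LF.map Prod.snd).sup = σ

/-- The σ-family associated with a labeled family. -/
noncomputable def sfam (LF : Multiset (Rect × Finset Pt)) : Fam :=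
  (LF.filter (fun x => x.2 ≠ ∅)).map (fun x => sbox x.2)

/-- Key geometric lemma, one coordinate. -/
lemma key_coord (f : Pt → ℕ)
    (hord : ∀ p ∈ σ, ∀ q ∈ σ, f p < f q ↔ f (φ p) < f (φ q))
    (hgen : ∀ p ∈ σ, ∀ q ∈ σ, p ≠ q → f p ≠ f q)
    {A B : Finset Pt} (hA : A.Nonempty) (hB : B.Nonempty)
    (hAσ : ∀ p ∈ A, p ∈ σ) (hBσ : ∀ p ∈ B, p ∈ σ)
    {IR IS : Iv}
    (hRA : ∀ p ∈ A, IR.1 ≤ f (φ p) ∧ f (φ p) ≤ IR.2)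
    (hSB : ∀ p ∈ B, IS.1 ≤ f (φ p) ∧ f (φ p) ≤ IS.2)
    (hov : ivOverlap (lo f A, hi f A) (lo f B, hi f B)) : ivOverlap IR IS := by
  have mono : ∀ a ∈ σ, ∀ b ∈ σ, f a ≤ f b → f (φ a) ≤ f (φ b) := by
    intro a ha b hb hle
    by_cases hab : a = b
    · subst hab; exact le_refl _
    · have : f a < f b := lt_of_le_of_ne hle (hgen a ha b hb hab)
      exact le_of_lt ((hord a ha b hb).1 this)
  obtain ⟨h1, h2⟩ := hov
  constructor
  · -- IR.1 ≤ IS.2, using lo f A ≤ hi f B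
    obtain ⟨a, ha, hea⟩ := lo_mem (f := f) hA
    obtain ⟨b, hb, heb⟩ := hi_mem (f := f) hB
    have : f a ≤ f b := by rw [hea, heb]; exact h1
    have hm := mono a (hAσ a ha) b (hBσ b hb) this
    exact le_trans (le_trans (hRA a ha).1 hm) (hSB b hb).2
  · obtain ⟨b, hb, heb⟩ := lo_mem (f := f) hB
    obtain ⟨a, ha, hea⟩ := hi_mem (f := f) hA
    have : f b ≤ f a := by rw [hea, heb]; exact h2
    have hm := mono b (hBσ b hb) a (hAσ a ha) this
    exact le_trans (le_trans (hSB b hb).1 hm) (hRA a ha).2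

/-- Lifting views from σ-boxes to π-rectangles. -/
lemma views_lift
    (hgen : GenPos σ)
    (hord : ∀ p ∈ σ, ∀ q ∈ σ,
      (p.1 < q.1 ↔ (φ p).1 < (φ q).1) ∧ (p.2 < q.2 ↔ (φ p).2 < (φ q).2))
    {A B : Finset Pt} (hA : A.Nonempty) (hB : B.Nonempty)
    (hAσ : ∀ p ∈ A, p ∈ σ) (hBσ : ∀ p ∈ B, p ∈ σ)
    {R S : Rect}
    (hRA : ∀ p ∈ A, InR (φ p) R) (hSB : ∀ p ∈ B, InR (φ p) S)
    (α : Fin 2) (hv : rviews α (sbox A) (sbox B)) : rviews α R S := by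
  fin_cases α
  · unfold rviews rproj at hv ⊢
    simp only [sbox] at hv
    simp only [if_pos rfl] at hv ⊢
    exact key_coord φ σ (fun p => p.1)
      (fun p hp q hq => (hord p hp q hq).1)
      (fun p hp q hq hne => (hgen p hp q hq hne).1)
      hA hB hAσ hBσ
      (fun p hp => ⟨(hRA p hp).1, (hRA p hp).2.1⟩)
      (fun p hp => ⟨(hSB p hp).1, (hSB p hp).2.1⟩) hv
  · unfold rviews rproj at hv ⊢
    simp only [sbox] at hv
    norm_num only at hv ⊢
    exact key_coord φ σ (fun p => p.2)
      (fun p hp q hq => (hord p hp q hq).2)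
      (fun p hp q hq hne => (hgen p hp q hq hne).2)
      hA hB hAσ hBσ
      (fun p hp => ⟨(hRA p hp).2.2.1, (hRA p hp).2.2.2⟩)
      (fun p hp => ⟨(hSB p hp).2.2.1, (hSB p hp).2.2.2⟩) hv

end Main
section Main2

variable {φ : Pt → Pt} {σ : Finset Pt}

lemma good_cons_decomp {LF : Multiset (Rect × Finset Pt)} {F F' : Fam}
    (hmap : LF.map Prod.fst = F) (hms : MergeStep F F') :
    ∃ x1 x2 rest, LF = x1 ::ₘ x2 ::ₘ rest ∧
      F' = bbox x1.1 x2.1 ::ₘ rest.map Prod.fst := by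
  obtain ⟨R1, R2, hR1, hR2, hF'⟩ := hms
  rw [← hmap] at hR1
  obtain ⟨x1, hx1, hx1e⟩ := Multiset.mem_map.1 hR1
  subst hx1e
  rw [← hmap, map_erase_of_mem Prod.fst hx1] at hR2
  obtain ⟨x2, hx2, hx2e⟩ := Multiset.mem_map.1 hR2
  subst hx2e
  refine ⟨x1, x2, (LF.erase x1).erase x2, ?_, ?_⟩
  · rw [Multiset.cons_erase hx2, Multiset.cons_erase hx1]
  · rw [hF', ← hmap, map_erase_of_mem Prod.fst hx1, map_erase_of_mem Prod.fst hx2]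

lemma sfam_cons (x : Rect × Finset Pt) (s : Multiset (Rect × Finset Pt)) :
    sfam (x ::ₘ s) = if x.2 = ∅ then sfam s else sbox x.2 ::ₘ sfam s := by
  unfold sfam
  by_cases h : x.2 = ∅
  · rw [Multiset.filter_cons, if_neg (by simp [h]), if_pos h]
    simp
  · rw [Multiset.filter_cons, if_pos h, if_neg h]
    simp

lemma step_lemma {LF : Multiset (Rect × Finset Pt)} {F F' : Fam}
    (hgood : Good φ σ LF) (hmap : LF.map Prod.fst = F) (hms : MergeStep F F') :
    ∃ LF', Good φ σ LF' ∧ LF'.map Prod.fst = F' ∧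
      (sfam LF' = sfam LF ∨ MergeStep (sfam LF) (sfam LF')) := by
  obtain ⟨x1, x2, rest, hLF, hF'⟩ := good_cons_decomp hmap hms
  obtain ⟨hinv, hsup⟩ := hgood
  refine ⟨(bbox x1.1 x2.1, x1.2 ∪ x2.2) ::ₘ rest, ⟨?_, ?_⟩, ?_, ?_⟩
  · -- invariant
    intro x hx p hp
    rcases Multiset.mem_cons.1 hx with he | hx'
    · subst he
      rcases Finset.mem_union.1 hp with h | h
      · obtain ⟨h1, h2⟩ := hinv x1 (by rw [hLF]; exact Multiset.mem_cons_self _ _) p h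
        exact ⟨h1, InR_bbox_left h2⟩
      · obtain ⟨h1, h2⟩ := hinv x2
          (by rw [hLF]; exact Multiset.mem_cons_of_mem (Multiset.mem_cons_self _ _)) p h
        exact ⟨h1, InR_bbox_right h2⟩
    · exact hinv x (by rw [hLF]; exact Multiset.mem_cons_of_mem (Multiset.mem_cons_of_mem hx')) p hp
  · -- sup
    rw [← hsup, hLF]
    simp only [Multiset.map_cons, Multiset.sup_cons]
    exact Finset.union_assoc _ _ _
  · rw [Multiset.map_cons, hF']
  · -- sfam relation
    rw [hLF, sfam_cons, sfam_cons, sfam_cons]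
    by_cases h1 : x1.2 = ∅ <;> by_cases h2 : x2.2 = ∅
    · left; rw [if_pos h1, if_pos h2, if_pos (by rw [h1, h2]; exact Finset.empty_union _)]
    · left; rw [if_pos h1, if_neg h2, if_neg (by rw [h1, Finset.empty_union]; exact h2)]
      rw [h1, Finset.empty_union]
    · left; rw [if_neg h1, if_pos h2, if_neg (by rw [h2, Finset.union_empty]; exact h1)]
      rw [h2, Finset.union_empty]
    · right
      rw [if_neg h1, if_neg h2, if_neg (by
        intro hc
        exact h1 (Finset.union_eq_empty.1 hc).1)]
      refine ⟨sbox x1.2, sbox x2.2, Multiset.mem_cons_self _ _, ?_, ?_⟩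
      · rw [Multiset.erase_cons_head]
        exact Multiset.mem_cons_self _ _
      · rw [Multiset.erase_cons_head, Multiset.erase_cons_head]
        rw [sbox_union (Finset.nonempty_iff_ne_empty.2 h1) (Finset.nonempty_iff_ne_empty.2 h2)]

lemma wide_lift
    (hgen : GenPos σ)
    (hord : ∀ p ∈ σ, ∀ q ∈ σ,
      (p.1 < q.1 ↔ (φ p).1 < (φ q).1) ∧ (p.2 < q.2 ↔ (φ p).2 < (φ q).2))
    {LF : Multiset (Rect × Finset Pt)} {F : Fam} {d : ℕ}
    (hgood : Good φ σ LF) (hmap : LF.map Prod.fst = F) (hw : Wide d F) :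
    Wide d (sfam LF) := by
  obtain ⟨hinv, _⟩ := hgood
  intro B hB α
  set N := LF.filter (fun x => x.2 ≠ ∅) with hN
  obtain ⟨x, hxN, hxe⟩ := Multiset.mem_map.1 hB
  have hxLF : x ∈ LF := Multiset.mem_of_mem_filter hxN
  have hx2 : x.2 ≠ ∅ := (Multiset.mem_filter.1 hxN).2
  have herase : (sfam LF).erase B = (N.erase x).map (fun y => sbox y.2) := by
    rw [← hxe]
    exact map_erase_of_mem _ hxN
  rw [herase]
  rw [← Multiset.countP_eq_card_filter, Multiset.countP_map]
  have step1 : (N.erase x).countP (fun y => rviews α B (sbox y.2)) ≤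
      (N.erase x).countP (fun y => rviews α x.1 y.1) := by
    apply countP_mono_mem
    intro y hy hv
    have hyN : y ∈ N := Multiset.mem_of_mem_erase hy
    have hyLF : y ∈ LF := Multiset.mem_of_mem_filter hyN
    have hy2 : y.2 ≠ ∅ := (Multiset.mem_filter.1 hyN).2
    rw [← hxe] at hv
    exact views_lift φ σ hgen hord
      (Finset.nonempty_iff_ne_empty.2 hx2) (Finset.nonempty_iff_ne_empty.2 hy2)
      (fun p hp => (hinv x hxLF p hp).1) (fun p hp => (hinv y hyLF p hp).1)
      (fun p hp => (hinv x hxLF p hp).2) (fun p hp => (hinv y hyLF p hp).2)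
      α hv
  have step2 : (N.erase x).countP (fun y => rviews α x.1 y.1) ≤
      (LF.erase x).countP (fun y => rviews α x.1 y.1) :=
    Multiset.countP_le_of_le _ (Multiset.erase_le_erase x (Multiset.filter_le _ _))
  have step3 : (LF.erase x).countP (fun y => rviews α x.1 y.1) =
      Multiset.card (Multiset.filter (fun R' => rviews α x.1 R') (F.erase x.1)) := by
    rw [← hmap, map_erase_of_mem Prod.fst hxLF, ← Multiset.countP_eq_card_filter,
      Multiset.countP_map]
    rw [Multiset.countP_eq_card_filter]
  have step4 := hw x.1 (by rw [← hmap]; exact Multiset.mem_map_of_mem Prod.fst hxLF) α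
  have hcount : (N.erase x).countP (fun y => rviews α B (sbox y.2)) < d := by
    omega
  calc Multiset.card (Multiset.filter (fun a => rviews α B (sbox a.2)) (N.erase x))
      = (N.erase x).countP (fun y => rviews α B (sbox y.2)) := by
        rw [Multiset.countP_eq_card_filter]
    _ < d := hcount

end Main2
section Build

variable {φ : Pt → Pt} {σ : Finset Pt}

lemma build_lemma :
    ∀ (L : List Fam), L.Chain' MergeStep →
      ∀ LF : Multiset (Rect × Finset Pt), Good φ σ LF → L.head? = some (LF.map Prod.fst) →
      ∃ M : List Fam, M.head? = some (sfam LF) ∧ M.Chain' MergeStep ∧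
        (∀ G ∈ M, ∃ LF', Good φ σ LF' ∧ G = sfam LF' ∧ LF'.map Prod.fst ∈ L) ∧
        ∃ LFe, Good φ σ LFe ∧ M.getLast? = some (sfam LFe) ∧
          L.getLast? = some (LFe.map Prod.fst) := by
  intro L
  induction L with
  | nil => intro _ LF _ hh; simp at hh
  | cons F L' ih =>
    intro hch LF hgood hh
    have hF : F = LF.map Prod.fst := by simpa using hh
    subst hF
    match L', hch with
    | [], _ =>
      exact ⟨[sfam LF], rfl, List.isChain_singleton _,
        fun G hG => ⟨LF, hgood, by simpa using hG, by simp⟩,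
        LF, hgood, rfl, rfl⟩
    | F' :: rest, hch =>
      have hms : MergeStep (LF.map Prod.fst) F' := (List.isChain_cons_cons.1 hch).1
      have hch' : (F' :: rest).Chain' MergeStep := (List.isChain_cons_cons.1 hch).2
      obtain ⟨LF2, hgood2, hmap2, hrel⟩ := step_lemma hgood rfl hms
      obtain ⟨M2, hh2, hch2, hmem2, LFe, hge, hl2, hl2'⟩ :=
        ih hch' LF2 hgood2 (by simp [hmap2])
      rcases hrel with heq | hmerge
      · refine ⟨M2, by rw [hh2, heq], hch2, ?_, LFe, hge, hl2, ?_⟩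
        · intro G hG
          obtain ⟨LF', h1, h2, h3⟩ := hmem2 G hG
          exact ⟨LF', h1, h2, List.mem_cons_of_mem _ h3⟩
        · rw [List.getLast?_cons_cons]; exact hl2'
      · obtain ⟨G2, M3, hM2⟩ : ∃ G2 M3, M2 = G2 :: M3 := by
          cases M2 with
          | nil => simp at hh2
          | cons a l => exact ⟨a, l, rfl⟩
        subst hM2
        have hG2 : G2 = sfam LF2 := by simpa using hh2
        refine ⟨sfam LF :: G2 :: M3, rfl, ?_, ?_, LFe, hge, ?_, ?_⟩
        · exact List.isChain_cons_cons.2 ⟨hG2 ▸ hmerge, hch2⟩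
        · intro G hG
          rcases List.mem_cons.1 hG with he | hG'
          · exact ⟨LF, hgood, he, List.mem_cons_self⟩
          · obtain ⟨LF', h1, h2, h3⟩ := hmem2 G hG'
            exact ⟨LF', h1, h2, List.mem_cons_of_mem _ h3⟩
        · rw [List.getLast?_cons_cons]; exact hl2
        · rw [List.getLast?_cons_cons]; exact hl2'

end Build

section Exists

/-- Any nonempty family can be merged down to a single rectangle. -/
lemma exists_chain : ∀ (n : ℕ) (F : Fam), Multiset.card F = n + 1 →
    ∃ L : List Fam, L.head? = some F ∧ L.Chain' MergeStep ∧
      (∃ G, L.getLast? = some G ∧ Multiset.card G = 1) ∧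
      ∀ G ∈ L, Multiset.card G ≤ Multiset.card F := by
  intro n
  induction n with
  | zero =>
    intro F hF
    exact ⟨[F], rfl, List.isChain_singleton _, ⟨F, rfl, hF⟩,
      fun G hG => by simp at hG; simp [hG]⟩
  | succ n ih =>
    intro F hF
    obtain ⟨R1, hR1⟩ : ∃ R1, R1 ∈ F := Multiset.card_pos_iff_exists_mem.1 (by omega)
    obtain ⟨R2, hR2⟩ : ∃ R2, R2 ∈ F.erase R1 := by
      apply Multiset.card_pos_iff_exists_mem.1
      rw [Multiset.card_erase_of_mem hR1, hF]
      exact Nat.succ_pos n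
    set F' : Fam := bbox R1 R2 ::ₘ (F.erase R1).erase R2 with hF'def
    have hcard : Multiset.card F' = n + 1 := by
      rw [hF'def, Multiset.card_cons, Multiset.card_erase_of_mem hR2,
        Multiset.card_erase_of_mem hR1, hF]
      rfl
    obtain ⟨L', hh', hch', hlast', hle'⟩ := ih F' hcard
    refine ⟨F :: L', rfl, ?_, ?_, ?_⟩
    · apply List.isChain_cons.2
      constructor
      · intro y hy
        rw [hh'] at hy
        cases hy
        exact ⟨R1, R2, hR1, hR2, rfl⟩
      · exact hch'
    · obtain ⟨G, hG, hG1⟩ := hlast'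
      refine ⟨G, ?_, hG1⟩
      cases L' with
      | nil => simp at hh'
      | cons a l => rw [List.getLast?_cons_cons]; exact hG
    · intro G hG
      rcases List.mem_cons.1 hG with he | hG'
      · simp [he]
      · have := hle' G hG'
        omega

lemma hasWidth_card {P : Finset Pt} (hP : P.Nonempty) : HasWidthLE P P.card := by
  have hc : Multiset.card (Multiset.map ptRect P.val) = (P.card - 1) + 1 := by
    rw [Multiset.card_map]
    have : 0 < P.card := Finset.card_pos.2 hP
    show P.card = P.card - 1 + 1
    omega
  obtain ⟨L, hh, hch, hlast, hle⟩ := exists_chain _ _ hc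
  refine ⟨L, ⟨hh, hch, hlast⟩, ?_⟩
  intro G hG R hR α
  have h1 : Multiset.card (Multiset.filter (fun R' => rviews α R R') (G.erase R)) ≤
      Multiset.card (G.erase R) := Multiset.card_le_card (Multiset.filter_le _ _)
  have h2 : Multiset.card (G.erase R) = Multiset.card G - 1 :=
    Multiset.card_erase_of_mem hR
  have h3 := hle G hG
  have h4 : 0 < Multiset.card G := Multiset.card_pos_iff_exists_mem.2 ⟨R, hR⟩
  have h5 : Multiset.card (Multiset.map ptRect P.val) = P.card := by
    rw [Multiset.card_map]; rfl
  omega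

lemma no_width_empty (d : ℕ) : ¬ HasWidthLE (∅ : Finset Pt) d := by
  rintro ⟨L, ⟨hh, hch, G, hG, hG1⟩, -⟩
  cases L with
  | nil => simp at hh
  | cons F L' =>
    have hF : F = 0 := by simpa using hh
    subst hF
    cases L' with
    | nil =>
      simp at hG
      subst hG
      simp at hG1
    | cons F' rest =>
      obtain ⟨R1, R2, hR1, -⟩ := (List.isChain_cons_cons.1 hch).1
      simp at hR1

end Exists
section Final

lemma width_le_of_subpattern {σ π : Finset Pt} (hσ : GenPos σ) (hσne : σ.Nonempty)
    (φ : Pt → Pt) (hinj : Set.InjOn φ ↑σ) (hmem : ∀ p ∈ σ, φ p ∈ π)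
    (hord : ∀ p ∈ σ, ∀ q ∈ σ,
      (p.1 < q.1 ↔ (φ p).1 < (φ q).1) ∧ (p.2 < q.2 ↔ (φ p).2 < (φ q).2))
    {d : ℕ} (hπd : HasWidthLE π d) : HasWidthLE σ d := by
  obtain ⟨L, ⟨hh, hch, Flast, hlast, hlast1⟩, hwide⟩ := hπd
  -- σ's images form a submultiset of π
  have himg : σ.val.map φ ≤ π.val := by
    have h1 : (σ.image φ).val = σ.val.map φ := Finset.image_val_of_injOn hinj
    have h2 : σ.image φ ⊆ π := fun q hq => by
      obtain ⟨p, hp, he⟩ := Finset.mem_image.1 hq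
      exact he ▸ hmem p hp
    rw [← h1]
    exact Finset.val_le_iff.2 h2
  obtain ⟨C, hC⟩ := Multiset.le_iff_exists_add.1 himg
  -- initial labeled family
  set LF0 : Multiset (Rect × Finset Pt) :=
    σ.val.map (fun p => (ptRect (φ p), ({p} : Finset Pt))) +
      C.map (fun q => (ptRect q, (∅ : Finset Pt))) with hLF0
  have hmap0 : LF0.map Prod.fst = Multiset.map ptRect π.val := by
    rw [hLF0, Multiset.map_add, Multiset.map_map, Multiset.map_map, hC,
      Multiset.map_add, Multiset.map_map]
    rfl
  have hgood0 : Good φ σ LF0 := by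
    constructor
    · intro x hx p hp
      rcases Multiset.mem_add.1 hx with h | h
      · obtain ⟨a, ha, he⟩ := Multiset.mem_map.1 h
        subst he
        simp only [Finset.mem_singleton] at hp
        subst hp
        exact ⟨ha, le_refl _, le_refl _, le_refl _, le_refl _⟩
      · obtain ⟨a, ha, he⟩ := Multiset.mem_map.1 h
        subst he
        simp at hp
    · apply le_antisymm
      · refine Multiset.sup_le.mpr ?_
        intro b hb
        rw [hLF0, Multiset.map_add] at hb
        rcases Multiset.mem_add.1 hb with h | h
        · obtain ⟨a, ha, he⟩ := Multiset.mem_map.1 h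
          obtain ⟨a', ha', he'⟩ := Multiset.mem_map.1 ha
          subst he'
          simp only at he
          subst he
          intro q hq
          simp only [Finset.mem_singleton] at hq
          exact hq ▸ ha'
        · obtain ⟨a, ha, he⟩ := Multiset.mem_map.1 h
          obtain ⟨a', ha', he'⟩ := Multiset.mem_map.1 ha
          subst he'
          simp only at he
          subst he
          exact Finset.empty_subset σ
      · intro p hp
        have h1 : ({p} : Finset Pt) ∈ LF0.map Prod.snd := by
          rw [hLF0, Multiset.map_add, Multiset.map_map]
          apply Multiset.mem_add.2
          left
          exact Multiset.mem_map.2 ⟨p, hp, rfl⟩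
        have := Multiset.le_sup h1
        exact this (Finset.mem_singleton_self p)
  have hsfam0 : sfam LF0 = Multiset.map ptRect σ.val := by
    rw [hLF0]
    unfold sfam
    rw [Multiset.filter_add]
    have h1 : Multiset.filter (fun x => x.2 ≠ ∅)
        (σ.val.map (fun p => (ptRect (φ p), ({p} : Finset Pt)))) =
        σ.val.map (fun p => (ptRect (φ p), ({p} : Finset Pt))) := by
      apply Multiset.filter_eq_self.2
      intro x hx
      obtain ⟨a, ha, he⟩ := Multiset.mem_map.1 hx
      subst he
      exact Finset.singleton_ne_empty a
    have h2 : Multiset.filter (fun x => x.2 ≠ ∅)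
        (C.map (fun q => (ptRect q, (∅ : Finset Pt)))) = 0 := by
      apply Multiset.filter_eq_nil.2
      intro x hx
      obtain ⟨a, ha, he⟩ := Multiset.mem_map.1 hx
      subst he
      simp
    rw [h1, h2, add_zero, Multiset.map_map]
    apply Multiset.map_congr rfl
    intro p hp
    exact sbox_singleton p
  have hh0 : L.head? = some (LF0.map Prod.fst) := by rw [hmap0]; exact hh
  obtain ⟨M, hMh, hMch, hMmem, LFe, hge, hMl, hMl'⟩ :=
    build_lemma (σ := σ) L hch LF0 hgood0 hh0
  -- last family of L
  have hFe : LFe.map Prod.fst = Flast := by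
    rw [hMl'] at hlast
    exact Option.some_injective _ hlast
  have hcard1 : Multiset.card LFe = 1 := by
    rw [← Multiset.card_map Prod.fst, hFe, hlast1]
  obtain ⟨x, hx⟩ := Multiset.card_eq_one.1 hcard1
  have hx2 : x.2 = σ := by
    have := hge.2
    rw [hx] at this
    simpa using this
  have hMlast : ∃ G, M.getLast? = some G ∧ Multiset.card G = 1 := by
    refine ⟨sfam LFe, hMl, ?_⟩
    rw [hx, show ({x} : Multiset (Rect × Finset Pt)) = x ::ₘ 0 from rfl, sfam_cons]
    have hne : x.2 ≠ ∅ := by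
      rw [hx2]
      exact Finset.nonempty_iff_ne_empty.1 hσne
    rw [if_neg hne]
    simp [sfam]
  refine ⟨M, ⟨by rw [hMh, hsfam0], hMch, hMlast⟩, ?_⟩
  intro G hG
  obtain ⟨LF', hg', he', hmem'⟩ := hMmem G hG
  rw [he']
  exact wide_lift hσ hord hg' rfl (hwide _ hmem')

end Final
/-- if σ is a subpattern of π then w(σ) ≤ w(π). -/
theorem stmt0 (σ π : Finset Pt) (hσ : GenPos σ) (hπ : GenPos π)
    (h : Subpattern σ π) : permWidth σ ≤ permWidth π := by
  obtain ⟨φ, hinj, hmem, hord⟩ := h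
  rcases Finset.eq_empty_or_nonempty σ with rfl | hσne
  · have he : {d | HasWidthLE (∅ : Finset Pt) d} = ∅ :=
      Set.eq_empty_iff_forall_notMem.2 (fun d hd => no_width_empty d hd)
    unfold permWidth
    rw [he, Nat.sInf_empty]
    exact Nat.zero_le _
  · have hπne : π.Nonempty := by
      obtain ⟨p, hp⟩ := hσne
      exact ⟨φ p, hmem p hp⟩
    have hSne : {d | HasWidthLE π d}.Nonempty := ⟨π.card, hasWidth_card hπne⟩
    have hd : HasWidthLE π (permWidth π) := Nat.sInf_mem hSne
    exact Nat.sInf_le (width_le_of_subpattern hσ hσne φ hinj hmem hord hd)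
end

section
/- If a permutation π has width at most d, then π contains a d-close pair: two points p, p' such that for each coordinate α∈{1,2}, fewer than d other points of π lie strictly between p and p' in coordinate α. -/
lemma ptRect_injective : Function.Injective ptRect := by
  intro p q h
  simp only [ptRect, Prod.mk.injEq] at h
  exact Prod.ext h.1.1 h.2.1

lemma exists_decomp_aux : ∀ n (F : Fam), Multiset.card F = n + 1 →
    ∃ L : List Fam, L.head? = some F ∧ List.Chain' MergeStep L ∧
      (∃ G, L.getLast? = some G ∧ Multiset.card G = 1) ∧
      ∀ F' ∈ L, Multiset.card F' ≤ n + 1 := by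
  intro n
  induction n with
  | zero =>
    intro F hF
    exact ⟨[F], rfl, List.isChain_singleton F, ⟨F, rfl, hF⟩, by simp [hF]⟩
  | succ n ih =>
    intro F hF
    obtain ⟨R1, hR1⟩ : ∃ R1, R1 ∈ F := Multiset.exists_mem_of_ne_zero (by
      intro h0; rw [h0] at hF; simp at hF)
    obtain ⟨R2, hR2⟩ : ∃ R2, R2 ∈ F.erase R1 := Multiset.exists_mem_of_ne_zero (by
      intro h0
      have := Multiset.card_erase_of_mem hR1
      rw [h0, hF] at this; simp at this)
    set F' : Fam := bbox R1 R2 ::ₘ ((F.erase R1).erase R2) with hF'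
    have hcard' : Multiset.card F' = n + 1 := by
      rw [hF', Multiset.card_cons, Multiset.card_erase_of_mem hR2,
        Multiset.card_erase_of_mem hR1, hF]
      rfl
    obtain ⟨L', hhead, hchain, hlast, hbound⟩ := ih F' hcard'
    obtain ⟨a, t, rfl⟩ : ∃ a t, L' = a :: t := by
      cases L' with
      | nil => simp at hhead
      | cons a t => exact ⟨a, t, rfl⟩
    have ha : a = F' := by simpa using hhead
    subst ha
    refine ⟨F :: F' :: t, rfl, ?_, ?_, ?_⟩
    · exact List.IsChain.cons_cons ⟨R1, R2, hR1, hR2, hF'⟩ hchain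
    · obtain ⟨G, hG1, hG2⟩ := hlast
      exact ⟨G, by rw [List.getLast?_cons_cons]; exact hG1, hG2⟩
    · intro X hX
      rcases List.mem_cons.mp hX with rfl | hX
      · exact le_of_eq hF
      · exact le_trans (hbound X hX) (by omega)

lemma hasWidthLE_card (P : Finset Pt) (hcard : 1 ≤ P.card) :
    HasWidthLE P P.card := by
  set F0 : Fam := Multiset.map ptRect P.val with hF0
  have hc : Multiset.card F0 = P.card := by rw [hF0, Multiset.card_map]; rfl
  obtain ⟨m, hm⟩ : ∃ m, P.card = m + 1 := ⟨P.card - 1, by omega⟩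
  obtain ⟨L, hhead, hchain, hlast, hbound⟩ := exists_decomp_aux m F0 (by rw [hc, hm])
  refine ⟨L, ⟨hhead, hchain, hlast⟩, ?_⟩
  intro F hF R hR α
  have h1 : Multiset.card (Multiset.filter (fun R' => rviews α R R') (F.erase R))
      ≤ Multiset.card (F.erase R) := Multiset.card_le_card (Multiset.filter_le _ _)
  have h2 : Multiset.card (F.erase R) = Multiset.card F - 1 :=
    Multiset.card_erase_of_mem hR
  have h3 := hbound F hF
  omega

lemma hasWidthLE_mono (P : Finset Pt) {d d' : ℕ} (hdd : d ≤ d') (h : HasWidthLE P d) :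
    HasWidthLE P d' := by
  obtain ⟨L, hL, hw⟩ := h
  exact ⟨L, hL, fun F hF R hR α => lt_of_lt_of_le (hw F hF R hR α) hdd⟩

/-- if w(π) ≤ d then π has a d-close pair. -/
theorem stmt1 (π : Finset Pt) (hπ : GenPos π) (hcard : 2 ≤ π.card) (d : ℕ)
    (h : permWidth π ≤ d) :
    ∃ p ∈ π, ∃ p' ∈ π, p ≠ p' ∧ ClosePair d π p p' := by
  -- first, get HasWidthLE π d
  have hne : {d | HasWidthLE π d}.Nonempty :=
    ⟨π.card, hasWidthLE_card π (by omega)⟩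
  have hmem : HasWidthLE π (permWidth π) := Nat.sInf_mem hne
  have hwd : HasWidthLE π d := hasWidthLE_mono π h hmem
  obtain ⟨L, ⟨hhead, hchain, hlast⟩, hwide⟩ := hwd
  set F0 : Fam := Multiset.map ptRect π.val with hF0
  -- L starts with F0 and must have a second element
  obtain ⟨a, t, rfl⟩ : ∃ a t, L = a :: t := by
    cases L with
    | nil => simp at hhead
    | cons a t => exact ⟨a, t, rfl⟩
  have ha : a = F0 := by simpa [hF0] using hhead
  subst ha
  have hcF0 : Multiset.card F0 = π.card := by rw [hF0, Multiset.card_map]; rfl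
  obtain ⟨F1, t', rfl⟩ : ∃ F1 t', t = F1 :: t' := by
    cases t with
    | nil =>
      obtain ⟨G, hG1, hG2⟩ := hlast
      simp only [List.getLast?_singleton, Option.some.injEq] at hG1
      subst hG1
      omega
    | cons F1 t' => exact ⟨F1, t', rfl⟩
  have hstep : MergeStep F0 F1 := (List.isChain_cons_cons.mp hchain).1
  obtain ⟨R1, R2, hR1, hR2, hF1⟩ := hstep
  obtain ⟨p, hp, hpR⟩ : ∃ p ∈ π.val, ptRect p = R1 := by
    rw [hF0] at hR1
    exact Multiset.mem_map.mp hR1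
  have hR2' : R2 ∈ F0 := Multiset.mem_of_mem_erase hR2
  obtain ⟨p', hp', hpR'⟩ : ∃ p' ∈ π.val, ptRect p' = R2 := by
    rw [hF0] at hR2'
    exact Multiset.mem_map.mp hR2'
  have hnodupF0 : F0.Nodup := by
    rw [hF0]; exact Multiset.Nodup.map ptRect_injective π.nodup
  have hR12 : R2 ≠ R1 := fun he => hnodupF0.notMem_erase (he ▸ hR2)
  have hpne : p ≠ p' := fun he => hR12 (by rw [← hpR, ← hpR', he])
  refine ⟨p, hp, p', hp', hpne, ?_⟩
  -- the close-pair property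
  intro α
  set B := bbox R1 R2 with hB
  have hBmem : B ∈ F1 := by rw [hF1]; exact Multiset.mem_cons_self _ _
  have hwB := hwide F1 (by simp) B hBmem α
  have heraseB : F1.erase B = (F0.erase R1).erase R2 := by
    rw [hF1]; exact Multiset.erase_cons_head _ _
  -- embed the between-points into the filtered multiset
  set S := π.filter (Between α p p') with hS
  have hsub : ∀ q ∈ S.val, ptRect q ∈
      Multiset.filter (fun R' => rviews α B R') (F1.erase B) := by
    intro q hq
    have hq' := Finset.mem_filter.mp hq
    have hqπ : q ∈ π.val := hq'.1
    have hbtw : Between α p p' q := hq'.2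
    have hqp : q ≠ p := by
      rintro rfl
      obtain ⟨h1, h2⟩ := hbtw
      rcases min_cases (coordPt α q) (coordPt α p') with ⟨e, _⟩ | ⟨e, _⟩ <;>
        rcases max_cases (coordPt α q) (coordPt α p') with ⟨f, _⟩ | ⟨f, _⟩ <;>
        omega
    have hqp' : q ≠ p' := by
      rintro rfl
      obtain ⟨h1, h2⟩ := hbtw
      rcases min_cases (coordPt α p) (coordPt α q) with ⟨e, _⟩ | ⟨e, _⟩ <;>
        rcases max_cases (coordPt α p) (coordPt α q) with ⟨f, _⟩ | ⟨f, _⟩ <;>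
        omega
    have hmem0 : ptRect q ∈ F0 := by
      rw [hF0]; exact Multiset.mem_map_of_mem _ hqπ
    have hmem1 : ptRect q ∈ (F0.erase R1).erase R2 := by
      refine Multiset.mem_erase_of_ne ?_ |>.mpr
        (Multiset.mem_erase_of_ne ?_ |>.mpr hmem0)
      · intro he; rw [← hpR'] at he; exact hqp' (ptRect_injective he)
      · intro he; rw [← hpR] at he; exact hqp (ptRect_injective he)
    rw [Multiset.mem_filter]
    refine ⟨by rw [heraseB]; exact hmem1, ?_⟩
    -- rviews α B (ptRect q)
    obtain ⟨h1, h2⟩ := hbtw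
    rw [hB, ← hpR, ← hpR']
    fin_cases α <;>
      simp only [rviews, rproj, ivOverlap, bbox, ptRect, coordPt, Fin.mk_zero, Fin.mk_one,
        Fin.isValue, reduceIte, if_true, if_false, one_ne_zero] at h1 h2 ⊢ <;>
      constructor <;> omega
  have hle : S.val.map ptRect ≤
      Multiset.filter (fun R' => rviews α B R') (F1.erase B) := by
    rw [Multiset.le_iff_subset (Multiset.Nodup.map ptRect_injective S.nodup)]
    intro x hx
    obtain ⟨q, hq, rfl⟩ := Multiset.mem_map.mp hx
    exact hsub q hq
  have := Multiset.card_le_card hle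
  simp only [Multiset.card_map] at this
  calc S.card ≤ _ := this
    _ < d := hwB
end
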